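/- Let f ∈ C^∞(ℝ^{2k}, ℝ) and suppose the Hamiltonian vector field X_f has a global flow φ : ℝ × ℝ^{2k} → ℝ^{2k} (φ_0 = id, ∂_t φ_t(x) = X_f(φ_t(x)), φ_{t+s} = φ_t ∘ φ_s). For ψ ∈ C^∞(ℝ^{2k}, ℂ) define the prequantization push-forward (U_t ψ)(x) = exp(−2πi·t·f(x)/h) · exp((2πi/h)·∫₀ᵗ α(X_f)(φ_{s−t}(x)) ds) · ψ(φ_{−t}(x)). Then for every x ∈ ℝ^{2k} the map t ↦ (U_t ψ)(x) is differentiable at t = 0 and iħ · (d/dt)|_{t=0} (U_t ψ)(x) = −iħ·(∇_{X_f} ψ)(x) + f(x)·ψ(x) = (P_f ψ)(x). -/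

import Mathlib

open MeasureTheory

noncomputable section

/-- The model phase space `ℝ^{2k} = ℝ^k × ℝ^k` with coordinates `(j, ϑ)`. -/
abbrev Phase (k : ℕ) : Type := (Fin k → ℝ) × (Fin k → ℝ)

/-- The Hamiltonian vector field `X_f = (−∂f/∂ϑ, ∂f/∂j)` of `f` for the
symplectic form `ω = Σᵢ djᵢ ∧ dϑᵢ`. -/
noncomputable def HamVF {k : ℕ} (f : Phase k → ℝ) (x : Phase k) : Phase k :=
  (fun i => -(fderiv ℝ f x ((0 : Fin k → ℝ), Pi.single i 1)),
   fun i => fderiv ℝ f x (Pi.single i 1, (0 : Fin k → ℝ)))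

/-- The Poisson bracket `{f,g} = df(X_g)`. -/
noncomputable def poisson {k : ℕ} (f g : Phase k → ℝ) (x : Phase k) : ℝ :=
  fderiv ℝ f x (HamVF g x)

/-- The Liouville 1-form `α = Σᵢ jᵢ dϑᵢ` evaluated on a vector field:
`α(X)(j,ϑ) = Σᵢ jᵢ · X^ϑᵢ(j,ϑ)`. -/
noncomputable def alphaX {k : ℕ} (X : Phase k → Phase k) (x : Phase k) : ℝ :=
  ∑ i, x.1 i * (X x).2 i

/-- The constant `2πi/h`. -/
noncomputable def twoPiIh (h : ℝ) : ℂ := ((2 * Real.pi : ℝ) : ℂ) * Complex.I / (h : ℂ)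

/-- `ħ = h/(2π)` as a complex number. -/
noncomputable def hbarC (h : ℝ) : ℂ := ((h / (2 * Real.pi) : ℝ) : ℂ)

/-- Covariant derivative `∇_X ψ = Dψ(X) − (2πi/h)·α(X)·ψ` in the trivialization
of the prequantization line bundle. -/
noncomputable def nablaCov {k : ℕ} (h : ℝ) (X : Phase k → Phase k)
    (ψ : Phase k → ℂ) (x : Phase k) : ℂ :=
  fderiv ℝ ψ x (X x) - twoPiIh h * ((alphaX X x : ℝ) : ℂ) * ψ x

/-- The prequantization operator `P_f ψ = −iħ·∇_{X_f} ψ + f·ψ`. -/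
noncomputable def Preq {k : ℕ} (h : ℝ) (f : Phase k → ℝ)
    (ψ : Phase k → ℂ) (x : Phase k) : ℂ :=
  -(Complex.I * hbarC h) * nablaCov h (HamVF f) ψ x + ((f x : ℝ) : ℂ) * ψ x

end

/-- The prequantization push-forward
`(U_t ψ)(x) = e^{−2πi t f(x)/h} · e^{(2πi/h)·∫₀ᵗ α(X_f)(φ_{s−t}(x)) ds} · ψ(φ_{−t}(x))`. -/
noncomputable def preqPush {k : ℕ} (h : ℝ) (f : Phase k → ℝ)
    (φ : ℝ → Phase k → Phase k) (ψ : Phase k → ℂ) (t : ℝ) (x : Phase k) : ℂ :=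
  Complex.exp (-(twoPiIh h) * (t : ℂ) * ((f x : ℝ) : ℂ))
    * Complex.exp (twoPiIh h * ((∫ s in (0:ℝ)..t, alphaX (HamVF f) (φ (s - t) x) : ℝ) : ℂ))
    * ψ (φ (-t) x)

-- key scalar identity
lemma key_scalar (h : ℝ) (hh : 0 < h) : Complex.I * hbarC h * twoPiIh h = -1 := by
  have hπ : (Real.pi : ℂ) ≠ 0 := Complex.ofReal_ne_zero.2 Real.pi_ne_zero
  have hh' : (h : ℂ) ≠ 0 := Complex.ofReal_ne_zero.2 hh.ne'
  simp only [hbarC, twoPiIh]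
  push_cast
  field_simp
  ring_nf
  simp [Complex.I_sq]

/-- the derivative at `t = 0` of the prequantization push-forward,
multiplied by `iħ`, is the prequantization operator:
`iħ·(d/dt)|₀ (U_t ψ)(x) = −iħ·(∇_{X_f}ψ)(x) + f(x)·ψ(x) = (P_f ψ)(x)`. -/
theorem prequantization_operator_from_flow
    (k : ℕ) (h : ℝ) (hh : 0 < h)
    (f : Phase k → ℝ) (hf : ContDiff ℝ (⊤ : ℕ∞) f)
    (φ : ℝ → Phase k → Phase k)
    (hφ0 : ∀ x, φ 0 x = x)
    (hφd : ∀ (x : Phase k) (t : ℝ), HasDerivAt (fun s => φ s x) (HamVF f (φ t x)) t)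
    (hφgrp : ∀ (t s : ℝ) (x : Phase k), φ (t + s) x = φ t (φ s x))
    (ψ : Phase k → ℂ) (hψ : ContDiff ℝ (⊤ : ℕ∞) ψ) :
    ∀ x : Phase k,
      DifferentiableAt ℝ (fun t : ℝ => preqPush h f φ ψ t x) 0 ∧
      Complex.I * hbarC h * deriv (fun t : ℝ => preqPush h f φ ψ t x) 0
        = -(Complex.I * hbarC h) * nablaCov h (HamVF f) ψ x + ((f x : ℝ) : ℂ) * ψ x ∧
      Complex.I * hbarC h * deriv (fun t : ℝ => preqPush h f φ ψ t x) 0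
        = Preq h f ψ x := by
  intro x
  set c : ℂ := twoPiIh h with hc
  -- continuity of the Hamiltonian vector field
  have hfd : Continuous (fderiv ℝ f) := hf.continuous_fderiv (by simp)
  have hXf_cont : Continuous (HamVF f) := by
    unfold HamVF
    exact (continuous_pi fun i => (hfd.clm_apply continuous_const).neg).prodMk
      (continuous_pi fun i => hfd.clm_apply continuous_const)
  have halpha_cont : Continuous (alphaX (HamVF f)) := by
    unfold alphaX
    exact continuous_finset_sum _ fun i _ =>
      ((continuous_apply i).comp continuous_fst).mul
        ((continuous_apply i).comp (continuous_snd.comp hXf_cont))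
  -- the function g : s ↦ α(X_f)(φ_s x)
  set g : ℝ → ℝ := fun s => alphaX (HamVF f) (φ s x) with hg
  have hγ_cont : Continuous (fun s => φ s x) :=
    continuous_iff_continuousAt.2 fun s => (hφd x s).continuousAt
  have hgc : Continuous g := halpha_cont.comp hγ_cont
  -- F : primitive of g
  set F : ℝ → ℝ := fun u => ∫ s in (0:ℝ)..u, g s with hF
  have hFd : HasDerivAt F (g 0) 0 :=
    intervalIntegral.integral_hasDerivAt_right (hgc.intervalIntegrable 0 0)
      (hgc.stronglyMeasurableAtFilter _ _) hgc.continuousAt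
  -- rewrite the integral in preqPush
  have hInt : ∀ t : ℝ, (∫ s in (0:ℝ)..t, alphaX (HamVF f) (φ (s - t) x)) = -F (-t) := by
    intro t
    have h1 : (∫ s in (0:ℝ)..t, alphaX (HamVF f) (φ (s - t) x)) = ∫ s in (0 - t)..(t - t), g s :=
      intervalIntegral.integral_comp_sub_right (fun s => g s) t
    rw [h1]
    simp only [zero_sub, sub_self]
    rw [intervalIntegral.integral_symm]
  -- derivative of t ↦ -F(-t) at 0 is g 0
  have hId : HasDerivAt (fun t : ℝ => -F (-t)) (g 0) 0 := by
    have h1 : HasDerivAt (fun t : ℝ => F (-t)) (g 0 * (-1)) 0 := by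
      have := (show HasDerivAt F (g 0) (-0) by simpa using hFd).comp 0 (hasDerivAt_neg (0:ℝ))
      simpa [neg_zero, Function.comp_def] using this
    have := h1.neg
    simp only [mul_neg, mul_one, neg_neg] at this
    exact this
  have hg0 : g 0 = alphaX (HamVF f) x := by simp [hg, hφ0]
  -- Factor A
  have hA : HasDerivAt (fun t : ℝ => Complex.exp (-c * (t : ℂ) * ((f x : ℝ) : ℂ)))
      (-c * ((f x : ℝ) : ℂ)) 0 := by
    have h1 : HasDerivAt (fun t : ℝ => ((t : ℝ) : ℂ)) 1 0 := (hasDerivAt_id (0:ℝ)).ofReal_comp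
    have h2 : HasDerivAt (fun t : ℝ => -c * ((t : ℝ) : ℂ) * ((f x : ℝ) : ℂ))
        (-c * ((f x : ℝ) : ℂ)) 0 := by
      simpa [mul_comm, mul_assoc, mul_left_comm] using (h1.const_mul (-c)).mul_const ((f x : ℝ) : ℂ)
    simpa using h2.cexp
  -- Factor B
  have hB : HasDerivAt (fun t : ℝ => Complex.exp (c * ((-F (-t) : ℝ) : ℂ)))
      (c * ((alphaX (HamVF f) x : ℝ) : ℂ)) 0 := by
    have h1 : HasDerivAt (fun t : ℝ => ((-F (-t) : ℝ) : ℂ)) ((g 0 : ℝ) : ℂ) 0 := hId.ofReal_comp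
    have h2 := (h1.const_mul c).cexp
    have hF0 : F 0 = 0 := by simp [hF]
    simpa [hF0, hg0, mul_comm, mul_assoc, mul_left_comm] using h2
  -- Factor C
  have hC : HasDerivAt (fun t : ℝ => ψ (φ (-t) x)) (-(fderiv ℝ ψ x (HamVF f x))) 0 := by
    have hγ : HasDerivAt (fun t : ℝ => φ (-t) x) (-(HamVF f x)) 0 := by
      have := (show HasDerivAt (fun s => φ s x) (HamVF f (φ 0 x)) (-0) by simpa using hφd x 0).scomp 0 ((hasDerivAt_neg (0:ℝ)))
      simpa [hφ0, Function.comp_def] using this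
    have hψx : HasFDerivAt ψ (fderiv ℝ ψ x) x := (hψ.differentiable (by simp) x).hasFDerivAt
    have := (show HasFDerivAt ψ (fderiv ℝ ψ x) (φ (-0) x) by simpa [hφ0] using hψx).comp_hasDerivAt 0 hγ
    simpa [hφ0, map_neg, Function.comp_def] using this
  -- assemble
  have hU : HasDerivAt (fun t : ℝ => preqPush h f φ ψ t x)
      ((-c * ((f x : ℝ) : ℂ)) * ψ x + (c * ((alphaX (HamVF f) x : ℝ) : ℂ)) * ψ x
        + -(fderiv ℝ ψ x (HamVF f x))) 0 := by
    have heq : (fun t : ℝ => preqPush h f φ ψ t x)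
        = fun t : ℝ => Complex.exp (-c * (t : ℂ) * ((f x : ℝ) : ℂ))
            * Complex.exp (c * ((-F (-t) : ℝ) : ℂ)) * ψ (φ (-t) x) := by
      funext t
      simp only [preqPush, hInt t, hc]
    rw [heq]
    have := (hA.mul hB).mul hC
    have hA0 : Complex.exp (-c * ((0:ℝ) : ℂ) * ((f x : ℝ) : ℂ)) = 1 := by simp
    have hB0 : Complex.exp (c * ((-F (-(0:ℝ)) : ℝ) : ℂ)) = 1 := by simp [hF]
    have hC0 : ψ (φ (-(0:ℝ)) x) = ψ x := by simp [hφ0]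
    refine HasDerivAt.congr_deriv this ?_
    simp only [Pi.mul_apply]
    rw [hA0, hB0, hC0]
    ring
  refine ⟨hU.differentiableAt, ?_, ?_⟩
  · rw [hU.deriv]
    have hk := key_scalar h hh
    unfold nablaCov
    rw [← hc]
    have : Complex.I * hbarC h * c = -1 := hk
    set a : ℂ := ((alphaX (HamVF f) x : ℝ) : ℂ)
    set fx : ℂ := ((f x : ℝ) : ℂ)
    set d : ℂ := (fderiv ℝ ψ x (HamVF f (x)) : ℂ)
    set ib : ℂ := Complex.I * hbarC h
    -- goal: ib * ((-c*fx)*ψx + (c*a)*ψx + -d) = -ib * (d - c*a*ψx) + fx*ψx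
    have hgoal : ib * ((-c * fx) * ψ x + (c * a) * ψ x + -d)
        = -ib * (d - c * a * ψ x) + (-(ib * c)) * fx * ψ x := by ring
    rw [hgoal, this]
    ring
  · rw [hU.deriv]
    unfold Preq nablaCov
    rw [← hc]
    have hk : Complex.I * hbarC h * c = -1 := key_scalar h hh
    set a : ℂ := ((alphaX (HamVF f) x : ℝ) : ℂ)
    set fx : ℂ := ((f x : ℝ) : ℂ)
    set d : ℂ := (fderiv ℝ ψ x (HamVF f (x)) : ℂ)
    set ib : ℂ := Complex.I * hbarC h
    have hgoal : ib * ((-c * fx) * ψ x + (c * a) * ψ x + -d)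
        = -ib * (d - c * a * ψ x) + (-(ib * c)) * fx * ψ x := by ring
    rw [hgoal, hk]
    ring
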